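/- Let I > 0 and define on the set Y = { (y, alpha) in R_{>0}^3 x R^5 : y0 + y1 + y2 = 1, |alpha0| <= I*y0, |alpha1| <= I*y1, |alpha2| <= I*y1, |alpha3| <= I*y2, |alpha4| <= I*y2 } the function omega(y, alpha) = 2(1+sqrt(2)*I)^2 * ( y0 ln y0 + y1 ln y1 + y2 ln y2 + ln 3 ) + alpha0^2/y0 + alpha1^2/y1 + alpha2^2/y1 + alpha3^2/y2 + alpha4^2/y2. Then omega is 1-strongly convex on Y with respect to the norm ||(y, alpha)|| = sqrt( (|y0|+|y1|+|y2|)^2 + ||alpha||_2^2 ). -/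

import Mathlib

/-!
Up to a constant, `ω = C · Σ yᵢ log yᵢ + Σ αⱼ² / y_{k(j)}` with `C = 2 (1 + √2 I)² ≥ 2 + 4 I²`;
bound the Jensen gap of each summand along the segment from `(p, a)` to `(q, b)`.

Since `(x log x)'' = 1 / x`, the map `x ↦ x log x` is `1 / max p q`-strongly convex between `p` and
`q`; as `Σ max (pᵢ, qᵢ) ≤ 2`, Cauchy–Schwarz turns the entropy gaps into the squared `ℓ¹` distance.
The gap of the perspective `α² / y` is `t (1 - t) (a q - b p)² / (p q s)`, which the cone
constraint `|α| ≤ I y` bounds below by `t (1 - t) / 2 · ((a - b)² - 2 I² (p - q)²)`; the loss is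
paid for by the `4 I²` part of `C`.
-/

open Real

theorem strongConvexOn_mul_log (M : ℝ) :
    StrongConvexOn (Set.Icc 0 M) M⁻¹ fun x : ℝ ↦ x * log x := by
  rw [strongConvexOn_iff_convex]
  simp only [Real.norm_eq_abs, sq_abs]
  refine convexOn_of_hasDerivWithinAt2_nonneg (convex_Icc 0 M)
    (f' := fun x ↦ log x + 1 - M⁻¹ * x) (f'' := fun x ↦ x⁻¹ - M⁻¹)
    (continuous_mul_log.sub (by fun_prop)).continuousOn ?_ ?_ ?_ <;>
    rw [interior_Icc] <;> rintro x ⟨hx₀, hxM⟩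
  · refine ((hasDerivAt_mul_log hx₀.ne').sub
      ((hasDerivAt_pow 2 x).const_mul (M⁻¹ / 2))).hasDerivWithinAt.congr_deriv ?_
    ring
  · refine (((hasDerivAt_log hx₀.ne').add_const 1).sub
      ((hasDerivAt_id x).const_mul M⁻¹)).hasDerivWithinAt.congr_deriv ?_
    simp
  · simpa using inv_anti₀ hx₀ hxM.le

theorem le_mul_log_gap {t p q : ℝ} (ht₀ : 0 ≤ t) (ht₁ : t ≤ 1) (hp : 0 ≤ p) (hq : 0 ≤ q) :
    t * (1 - t) / 2 * ((p - q) ^ 2 / max p q) ≤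
      t * (p * log p) + (1 - t) * (q * log q)
        - (t * p + (1 - t) * q) * log (t * p + (1 - t) * q) := by
  have h := (strongConvexOn_mul_log (max p q)).2 ⟨hp, le_max_left p q⟩ ⟨hq, le_max_right p q⟩
    ht₀ (sub_nonneg.2 ht₁) (add_sub_cancel t 1)
  simp only [smul_eq_mul, Real.norm_eq_abs, sq_abs] at h
  linarith [show t * (1 - t) / 2 * ((p - q) ^ 2 / max p q)
    = t * (1 - t) * ((max p q)⁻¹ / 2 * (p - q) ^ 2) by ring]

theorem sq_div_gap_eq {t a b p q : ℝ} (hp : 0 < p) (hq : 0 < q) (hs : 0 < t * p + (1 - t) * q) :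
    t * (a ^ 2 / p) + (1 - t) * (b ^ 2 / q) - (t * a + (1 - t) * b) ^ 2 / (t * p + (1 - t) * q) =
      t * (1 - t) * ((a * q - b * p) ^ 2 / (p * q * (t * p + (1 - t) * q))) := by
  field_simp
  ring

theorem sq_sub_le_of_abs_le_mul {I a b p q s : ℝ} (hq : 0 < q) (hq₁ : q ≤ 1) (hs : 0 < s)
    (hsp : s ≤ p) (ha : |a| ≤ I * p) :
    (a - b) ^ 2 ≤ 2 * ((a * q - b * p) ^ 2 / (p * q * s)) + 2 * (I ^ 2 * (p - q) ^ 2) := by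
  have hp : 0 < p := hs.trans_le hsp
  have hpqs : p * q * s ≤ p ^ 2 := by
    rw [sq, mul_assoc]
    gcongr
    nlinarith
  have ha₂ : a ^ 2 ≤ (I * p) ^ 2 := by simpa using pow_le_pow_left₀ (abs_nonneg a) ha 2
  calc (a - b) ^ 2 = ((a * q - b * p) / p + a * (p - q) / p) ^ 2 := by field_simp; ring
    _ ≤ 2 * (((a * q - b * p) / p) ^ 2 + (a * (p - q) / p) ^ 2) := add_sq_le
    _ ≤ 2 * ((a * q - b * p) ^ 2 / (p * q * s) + I ^ 2 * (p - q) ^ 2) := by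
      rw [div_pow, div_pow, mul_pow]
      gcongr
      calc a ^ 2 * (p - q) ^ 2 / p ^ 2 ≤ (I * p) ^ 2 * (p - q) ^ 2 / p ^ 2 := by gcongr
        _ = I ^ 2 * (p - q) ^ 2 := by field_simp
    _ = _ := by ring

theorem le_sq_div_gap {I t a b p q : ℝ} (ht₀ : 0 ≤ t) (ht₁ : t ≤ 1) (hp : 0 < p) (hp₁ : p ≤ 1)
    (hq : 0 < q) (hq₁ : q ≤ 1) (ha : |a| ≤ I * p) (hb : |b| ≤ I * q) :
    t * (1 - t) / 2 * ((a - b) ^ 2 - 2 * I ^ 2 * (p - q) ^ 2) ≤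
      t * (a ^ 2 / p) + (1 - t) * (b ^ 2 / q)
        - (t * a + (1 - t) * b) ^ 2 / (t * p + (1 - t) * q) := by
  set s := t * p + (1 - t) * q
  have hs : 0 < s := convex_Ioi (0 : ℝ) hp hq ht₀ (sub_nonneg.2 ht₁) (add_sub_cancel t 1)
  have key :
      (a - b) ^ 2 ≤ 2 * ((a * q - b * p) ^ 2 / (p * q * s)) + 2 * (I ^ 2 * (p - q) ^ 2) := by
    rcases le_total q p with hqp | hpq
    · exact sq_sub_le_of_abs_le_mul hq hq₁ hs (by nlinarith) ha
    · have := sq_sub_le_of_abs_le_mul hp hp₁ hs (by nlinarith) hb (b := a)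
      convert this using 1 <;> ring
  rw [sq_div_gap_eq hp hq hs]
  linear_combination t * (1 - t) / 2 * key

theorem sq_abs_add_abs_add_abs_le {m₀ m₁ m₂ : ℝ} (d₀ d₁ d₂ : ℝ) (h₀ : 0 < m₀) (h₁ : 0 < m₁)
    (h₂ : 0 < m₂) (hm : m₀ + m₁ + m₂ ≤ 2) :
    (|d₀| + |d₁| + |d₂|) ^ 2 ≤ 2 * (d₀ ^ 2 / m₀ + d₁ ^ 2 / m₁ + d₂ ^ 2 / m₂) := by
  have h := Finset.sq_sum_div_le_sum_sq_div Finset.univ ![|d₀|, |d₁|, |d₂|]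
    (g := ![m₀, m₁, m₂]) (by simp [Fin.forall_fin_succ, h₀, h₁, h₂])
  simp only [Fin.sum_univ_three, Matrix.cons_val, sq_abs] at h
  calc (|d₀| + |d₁| + |d₂|) ^ 2 = 2 * ((|d₀| + |d₁| + |d₂|) ^ 2 / 2) := by ring
    _ ≤ 2 * ((|d₀| + |d₁| + |d₂|) ^ 2 / (m₀ + m₁ + m₂)) := by gcongr
    _ ≤ _ := by gcongr

theorem sq_abs_add_abs_add_abs_add_sum_sq_le {I C m₀ m₁ m₂ : ℝ} (d₀ d₁ d₂ : ℝ) (h₀ : 0 < m₀)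
    (h₁ : 0 < m₁) (h₂ : 0 < m₂) (h₀' : m₀ ≤ 1) (h₁' : m₁ ≤ 1) (h₂' : m₂ ≤ 1)
    (hm : m₀ + m₁ + m₂ ≤ 2) (hC : 2 + 4 * I ^ 2 ≤ C) :
    (|d₀| + |d₁| + |d₂|) ^ 2 + 4 * I ^ 2 * (d₀ ^ 2 + d₁ ^ 2 + d₂ ^ 2) ≤
      C * (d₀ ^ 2 / m₀ + d₁ ^ 2 / m₁ + d₂ ^ 2 / m₂) := by
  have e₀ := le_div_self (sq_nonneg d₀) h₀ h₀'
  have e₁ := le_div_self (sq_nonneg d₁) h₁ h₁'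
  have e₂ := le_div_self (sq_nonneg d₂) h₂ h₂'
  linear_combination sq_abs_add_abs_add_abs_le d₀ d₁ d₂ h₀ h₁ h₂ hm + 4 * I ^ 2 * (e₀ + e₁ + e₂)
    + (d₀ ^ 2 / m₀ + d₁ ^ 2 / m₁ + d₂ ^ 2 / m₂) * hC

/-- The distance generating function ω is 1-strongly convex on Y with respect to the
norm ‖(y, α)‖ = sqrt((|y0|+|y1|+|y2|)^2 + ‖α‖₂^2), in the interpolation sense. -/
theorem stmt_10 (I : ℝ) (hI : 0 < I)
    (Y : Set ((Fin 3 → ℝ) × (Fin 5 → ℝ)))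
    (hY : Y = {z | (∀ i, 0 < z.1 i) ∧ z.1 0 + z.1 1 + z.1 2 = 1 ∧
      |z.2 0| ≤ I * z.1 0 ∧ |z.2 1| ≤ I * z.1 1 ∧ |z.2 2| ≤ I * z.1 1 ∧
      |z.2 3| ≤ I * z.1 2 ∧ |z.2 4| ≤ I * z.1 2})
    (ω : ((Fin 3 → ℝ) × (Fin 5 → ℝ)) → ℝ)
    (hω : ω = fun z =>
      2 * (1 + Real.sqrt 2 * I) ^ 2 *
        (z.1 0 * Real.log (z.1 0) + z.1 1 * Real.log (z.1 1) + z.1 2 * Real.log (z.1 2)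
          + Real.log 3)
        + (z.2 0) ^ 2 / z.1 0 + (z.2 1) ^ 2 / z.1 1 + (z.2 2) ^ 2 / z.1 1
        + (z.2 3) ^ 2 / z.1 2 + (z.2 4) ^ 2 / z.1 2)
    (nrm : ((Fin 3 → ℝ) × (Fin 5 → ℝ)) → ℝ)
    (hnrm : nrm = fun z => Real.sqrt ((|z.1 0| + |z.1 1| + |z.1 2|) ^ 2 +
      ((z.2 0) ^ 2 + (z.2 1) ^ 2 + (z.2 2) ^ 2 + (z.2 3) ^ 2 + (z.2 4) ^ 2))) :
    ∀ z ∈ Y, ∀ z' ∈ Y, ∀ t : ℝ, 0 ≤ t → t ≤ 1 →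
      ω (t • z + (1 - t) • z') ≤
        t * ω z + (1 - t) * ω z' - (1 / 2) * t * (1 - t) * (nrm (z - z')) ^ 2 := by
  subst hY hω hnrm
  rintro ⟨p, a⟩ ⟨hp, hp_sum, ha₀, ha₁, ha₂, ha₃, ha₄⟩ ⟨q, b⟩ ⟨hq, hq_sum, hb₀, hb₁, hb₂, hb₃, hb₄⟩
    t ht₀ ht₁
  simp only [Prod.fst_add, Prod.snd_add, Prod.smul_fst, Prod.smul_snd, Pi.add_apply,
    Pi.smul_apply, Prod.fst_sub, Prod.snd_sub, Pi.sub_apply, smul_eq_mul] at *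
  rw [Real.sq_sqrt (by positivity)]
  have hp₁ (i : Fin 3) : p i ≤ 1 := by fin_cases i <;> simp <;> linarith [hp 0, hp 1, hp 2]
  have hq₁ (i : Fin 3) : q i ≤ 1 := by fin_cases i <;> simp <;> linarith [hq 0, hq 1, hq 2]
  have hE (i : Fin 3) := le_mul_log_gap ht₀ ht₁ (hp i).le (hq i).le
  have hC : 2 + 4 * I ^ 2 ≤ 2 * (1 + √2 * I) ^ 2 := by
    nlinarith [Real.sq_sqrt (zero_le_two : (0 : ℝ) ≤ 2), Real.sqrt_nonneg 2]
  have key := sq_abs_add_abs_add_abs_add_sum_sq_le (p 0 - q 0) (p 1 - q 1) (p 2 - q 2)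
    (lt_max_of_lt_left (hp 0)) (lt_max_of_lt_left (hp 1)) (lt_max_of_lt_left (hp 2))
    (max_le (hp₁ 0) (hq₁ 0)) (max_le (hp₁ 1) (hq₁ 1)) (max_le (hp₁ 2) (hq₁ 2))
    (by linarith [max_le_add_of_nonneg (hp 0).le (hq 0).le,
      max_le_add_of_nonneg (hp 1).le (hq 1).le, max_le_add_of_nonneg (hp 2).le (hq 2).le]) hC
  linear_combination 2 * (1 + √2 * I) ^ 2 * (hE 0 + hE 1 + hE 2)
    + le_sq_div_gap ht₀ ht₁ (hp 0) (hp₁ 0) (hq 0) (hq₁ 0) ha₀ hb₀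
    + le_sq_div_gap ht₀ ht₁ (hp 1) (hp₁ 1) (hq 1) (hq₁ 1) ha₁ hb₁
    + le_sq_div_gap ht₀ ht₁ (hp 1) (hp₁ 1) (hq 1) (hq₁ 1) ha₂ hb₂
    + le_sq_div_gap ht₀ ht₁ (hp 2) (hp₁ 2) (hq 2) (hq₁ 2) ha₃ hb₃
    + le_sq_div_gap ht₀ ht₁ (hp 2) (hp₁ 2) (hq 2) (hq₁ 2) ha₄ hb₄
    + t * (1 - t) / 2 * key + I ^ 2 * t * (1 - t) * sq_nonneg (p 0 - q 0)
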